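/- arXiv:1608.07831 — 6 statements merged into one kernel-verified Lean document; each statement's English description precedes it below -/
import Mathlib

section
/- The Rogers-Veraart vulnerabilities are bounded above by the cyclic DebtRank vulnerabilities at all times: h_i^{RV}(t) ≤ h_i^{cDR}(t) for all banks i and all t ≥ 1, hence H^{RV}(∞) ≤ H^{cDR}(∞). -/
/-!
By induction on `t`. The cyclic DebtRank vulnerabilities are increasing in `t` and bounded by `1`,
and telescoping their update gives `h^cDR(t+1) ≥ min 1 (h^cDR(1) + L h^cDR(t))`. On the Rogers–Veraart
side, a bank that is not in default pays in full, so its relative shortfall `(p̄ⱼ - pⱼ(t)) / p̄ⱼ` is `0`,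
while a defaulted bank has shortfall at most `1 = h^cDR_j(t)`. Hence the shortfall vector is dominated by
`h^cDR(t)`, and comparing the two updates through the telescoped bound closes the induction.
-/

open Finset

variable {ι : Type*} [Fintype ι]

structure IsCyclicDebtRank (l : Matrix ι ι ℝ) (h : ℕ → ι → ℝ) : Prop where
  zero : ∀ i, h 0 i = 0
  one_mem : ∀ i, h 1 i ∈ Set.Icc 0 1
  succ : ∀ t, 1 ≤ t → ∀ i, h (t + 1) i = min 1 (h t i + ∑ j, l i j * (h t j - h (t - 1) j))

namespace IsCyclicDebtRank

variable {l : Matrix ι ι ℝ} {h : ℕ → ι → ℝ}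

theorem le_one (hc : IsCyclicDebtRank l h) : ∀ t i, h t i ≤ 1
  | 0, i => by rw [hc.zero i]; exact zero_le_one
  | 1, i => (hc.one_mem i).2
  | t + 2, i => by rw [hc.succ (t + 1) le_add_self i]; exact min_le_left _ _

theorem le_succ (hc : IsCyclicDebtRank l h) (hl : ∀ i j, 0 ≤ l i j) : ∀ t i, h t i ≤ h (t + 1) i
  | 0, i => by rw [hc.zero i]; exact (hc.one_mem i).1
  | t + 1, i => by
    have hinc : 0 ≤ ∑ j, l i j * (h (t + 1) j - h t j) :=
      sum_nonneg fun j _ => mul_nonneg (hl i j) (sub_nonneg.2 (hc.le_succ hl t j))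
    rw [hc.succ (t + 1) le_add_self i, Nat.add_sub_cancel]
    exact le_min (hc.le_one (t + 1) i) (le_add_of_nonneg_right hinc)

theorem monotone (hc : IsCyclicDebtRank l h) (hl : ∀ i j, 0 ≤ l i j) (i : ι) :
    Monotone (h · i) :=
  monotone_nat_of_le_succ fun t => hc.le_succ hl t i

theorem nonneg (hc : IsCyclicDebtRank l h) (hl : ∀ i j, 0 ≤ l i j) (t : ℕ) (i : ι) :
    0 ≤ h t i :=
  hc.zero i ▸ hc.monotone hl i (Nat.zero_le t)

theorem min_one_add_sum_le (hc : IsCyclicDebtRank l h) (hl : ∀ i j, 0 ≤ l i j) {t : ℕ}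
    (ht : 1 ≤ t) (i : ι) : min 1 (h 1 i + ∑ j, l i j * h t j) ≤ h (t + 1) i := by
  induction t, ht using Nat.le_induction generalizing i with
  | base =>
    rw [hc.succ 1 le_rfl i, Nat.sub_self]
    simp only [hc.zero, sub_zero, le_refl]
  | succ t ht ih =>
    have hinc : 0 ≤ ∑ j, l i j * (h (t + 1) j - h t j) :=
      sum_nonneg fun j _ => mul_nonneg (hl i j) (sub_nonneg.2 (hc.le_succ hl t j))
    rw [hc.succ (t + 1) (by omega) i, Nat.add_sub_cancel]
    rcases (hc.le_one (t + 1) i).lt_or_eq with hlt | hdef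
    · have hprev : h 1 i + ∑ j, l i j * h t j ≤ h (t + 1) i :=
        (min_le_iff.mp (ih i)).resolve_left (not_le.mpr hlt)
      have hsplit : ∑ j, l i j * h (t + 1) j
          = ∑ j, l i j * h t j + ∑ j, l i j * (h (t + 1) j - h t j) := by
        rw [← sum_add_distrib]
        exact sum_congr rfl fun j _ => by ring
      exact min_le_min le_rfl (by linarith)
    · rw [hdef]
      exact (min_le_left _ _).trans (le_min le_rfl (le_add_of_nonneg_right hinc))

end IsCyclicDebtRank

theorem rv_le_cdr {l : Matrix ι ι ℝ} (hl : ∀ i j, 0 ≤ l i j) {c r : ℕ → ι → ℝ}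
    (hc : IsCyclicDebtRank l c) (hr1 : ∀ i, r 1 i = c 1 i)
    {pbar : ι → ℝ} (hpbar : ∀ j, 0 < pbar j) {p : ℕ → ι → ℝ} (hp : ∀ t j, 0 ≤ p t j)
    (hrupd : ∀ t, 1 ≤ t → ∀ i, r t i < 1 →
      r (t + 1) i = min 1 (r 1 i + ∑ j, l i j * ((pbar j - p t j) / pbar j)))
    (hrdefault : ∀ t i, r t i = 1 → r (t + 1) i = 1)
    (hfullpay : ∀ t, 1 ≤ t → ∀ j, r t j < 1 → p t j = pbar j) {t : ℕ} (ht : 1 ≤ t) (i : ι) :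
    r t i ≤ c t i := by
  induction t, ht using Nat.le_induction generalizing i with
  | base => exact (hr1 i).le
  | succ t ht ih =>
    rcases (ih i).trans (hc.le_one t i) |>.lt_or_eq with hlt | hdef
    · have hshortfall : ∀ j, (pbar j - p t j) / pbar j ≤ c t j := fun j => by
        rcases lt_or_ge (r t j) 1 with hpaid | hdefj
        · rw [hfullpay t ht j hpaid, sub_self, zero_div]
          exact hc.nonneg hl t j
        · calc (pbar j - p t j) / pbar j ≤ 1 :=
                div_le_one_of_le₀ (by linarith [hp t j]) (hpbar j).le
            _ ≤ c t j := hdefj.trans (ih j)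
      rw [hrupd t ht i hlt, hr1 i]
      refine le_trans (min_le_min le_rfl (add_le_add le_rfl ?_)) (hc.min_one_add_sum_le hl ht i)
      exact sum_le_sum fun j _ => mul_le_mul_of_nonneg_left (hshortfall j) (hl i j)
    · rw [hrdefault t i hdef, ← hdef]
      exact (ih i).trans (hc.le_succ hl t i)

theorem sum_mul_div_sum_le_sum_mul_div_sum {w x y : ι → ℝ} (hw : ∀ i, 0 ≤ w i)
    (hxy : ∀ i, x i ≤ y i) : (∑ i, w i * x i) / (∑ i, w i) ≤ (∑ i, w i * y i) / (∑ i, w i) :=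
  div_le_div_of_nonneg_right (sum_le_sum fun i _ => mul_le_mul_of_nonneg_left (hxy i) (hw i))
    (sum_nonneg fun i _ => hw i)

theorem rv_vulnerability_le_cdr_vulnerability_general
    (n : ℕ) (l : Matrix (Fin n) (Fin n) ℝ) (hl : ∀ i j, 0 ≤ l i j)
    (le s pbar E0 : Fin n → ℝ) (hpbar : ∀ j, 0 < pbar j) (hE0 : ∀ i, 0 < E0 i)
    (p : ℕ → Fin n → ℝ) (hp : ∀ t j, p t j ∈ Set.Icc 0 (pbar j))
    (hRV hcDR : ℕ → Fin n → ℝ)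
    (hcDR0 : ∀ i, hcDR 0 i = 0)
    (hRV1 : ∀ i, hRV 1 i = min 1 (le i * s i))
    (hcDR1 : ∀ i, hcDR 1 i = min 1 (le i * s i))
    (h1mem : ∀ i, min 1 (le i * s i) ∈ Set.Icc (0:ℝ) 1)
    (hcupd : ∀ t, 1 ≤ t → ∀ i, hcDR (t+1) i =
      min 1 (hcDR t i + ∑ j, l i j * (hcDR t j - hcDR (t-1) j)))
    (hRVupd : ∀ t, 1 ≤ t → ∀ i, hRV t i < 1 →
      hRV (t+1) i = min 1 (hRV 1 i + ∑ j, l i j * ((pbar j - p t j) / pbar j)))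
    (hRVdefault : ∀ t i, hRV t i = 1 → hRV (t+1) i = 1)
    (hfullpay : ∀ t, 1 ≤ t → ∀ j, hRV t j < 1 → p t j = pbar j) :
    (∀ t, 1 ≤ t → ∀ i, hRV t i ≤ hcDR t i) ∧
    (∀ t, 1 ≤ t →
      (∑ i, E0 i * hRV t i) / (∑ i, E0 i) ≤ (∑ i, E0 i * hcDR t i) / (∑ i, E0 i)) := by
  have hc : IsCyclicDebtRank l hcDR := ⟨hcDR0, fun i => hcDR1 i ▸ h1mem i, hcupd⟩
  have hRV_le : ∀ t, 1 ≤ t → ∀ i, hRV t i ≤ hcDR t i := fun t ht =>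
    rv_le_cdr hl hc (fun i => (hRV1 i).trans (hcDR1 i).symm) hpbar (fun t j => (hp t j).1)
      hRVupd hRVdefault hfullpay ht
  exact ⟨hRV_le, fun t ht =>
    sum_mul_div_sum_le_sum_mul_div_sum (fun i => (hE0 i).le) (hRV_le t ht)⟩

/-- Rogers-Veraart vulnerabilities are bounded above by cyclic DebtRank
vulnerabilities at all times t ≥ 1, hence H^RV ≤ H^cDR (in particular at convergence). -/
theorem rv_vulnerability_le_cdr_vulnerability
    (n : ℕ) (l : Matrix (Fin n) (Fin n) ℝ) (hl : ∀ i j, 0 ≤ l i j)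
    (le s pbar E0 : Fin n → ℝ) (hpbar : ∀ j, 0 < pbar j) (hE0 : ∀ i, 0 < E0 i)
    (p : ℕ → Fin n → ℝ) (hp : ∀ t j, p t j ∈ Set.Icc 0 (pbar j))
    (hRV hcDR : ℕ → Fin n → ℝ)
    (hRV0 : ∀ i, hRV 0 i = 0) (hcDR0 : ∀ i, hcDR 0 i = 0)
    (hRV1 : ∀ i, hRV 1 i = min 1 (le i * s i))
    (hcDR1 : ∀ i, hcDR 1 i = min 1 (le i * s i))
    (h1mem : ∀ i, min 1 (le i * s i) ∈ Set.Icc (0:ℝ) 1)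
    (hcupd : ∀ t, 1 ≤ t → ∀ i, hcDR (t+1) i =
      min 1 (hcDR t i + ∑ j, l i j * (hcDR t j - hcDR (t-1) j)))
    (hRVbound : ∀ t i, hRV t i ∈ Set.Icc (0:ℝ) 1)
    (hRVupd : ∀ t, 1 ≤ t → ∀ i, hRV t i < 1 →
      hRV (t+1) i = min 1 (hRV 1 i + ∑ j, l i j * ((pbar j - p t j) / pbar j)))
    (hRVdefault : ∀ t i, hRV t i = 1 → hRV (t+1) i = 1)
    (hfullpay : ∀ t, 1 ≤ t → ∀ j, hRV t j < 1 → p t j = pbar j) :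
    (∀ t, 1 ≤ t → ∀ i, hRV t i ≤ hcDR t i) ∧
    (∀ t, 1 ≤ t →
      (∑ i, E0 i * hRV t i) / (∑ i, E0 i) ≤ (∑ i, E0 i * hcDR t i) / (∑ i, E0 i)) :=
  rv_vulnerability_le_cdr_vulnerability_general n l hl le s pbar E0 hpbar hE0 p hp hRV hcDR hcDR0
    hRV1 hcDR1 h1mem hcupd hRVupd hRVdefault hfullpay
end

section
/- It is not true in general that the Default Cascades model yields lower final global vulnerability than the acyclic DebtRank model: there exists a 3-bank financial network and a shock such that H^{DC}(∞) > H^{aDR}(∞). Concretely, for the directed 3-cycle with equities E(0) = (5, 15, 25), external assets A^e = (100, 100, 100), interbank assets A^b_{13} = 20, A^b_{21} = 20, A^b_{32} = 15, and a uniform 10% shock on external assets, the DC process ends with all three banks defaulted (h = (1,1,1)) while the aDR process ends with h = (1, 1, 4/5). -/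
/-!
Losses flow around the cycle 1 → 2 → 3 → 1 with relative exposures `l₂₁ = 4/3`, `l₃₂ = 3/5`,
`l₁₃ = 4`. The shock leaves `h = (1, 2/3, 2/5)`, so every bank is distressed at once and aDR passes
each bank's loss on a single time, at this partial level: bank 3 receives only `(3/5)(2/3)` and
freezes at `4/5`. DC instead waits for a bank to default and then passes on its full loss: the
default of bank 1 pushes bank 2 to 1, whose default then pushes bank 3 to `2/5 + 3/5 = 1`.
-/

open Finset

section Cascade

variable {ι : Type*} [Fintype ι]

/-- The update shared by DC and aDR, `h (t+1) = cascadeStep l A(t) (h t)`; the two processes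
differ only in the active set `A(t)`, given by `NewlyDefaulted` and `NewlyDistressed`. -/
def cascadeStep (l : Matrix ι ι ℝ) (active : ι → Prop) [DecidablePred active] (h : ι → ℝ) :
    ι → ℝ :=
  fun i => min 1 (h i + ∑ j, if active j then l i j * h j else 0)

abbrev NewlyDefaulted (h : ℕ → ι → ℝ) (t : ℕ) (j : ι) : Prop :=
  h t j = 1 ∧ ∀ t' < t, h t' j < 1

abbrev NewlyDistressed (h : ℕ → ι → ℝ) (t : ℕ) (j : ι) : Prop :=
  0 < h t j ∧ ∀ t' < t, h t' j = 0

variable {l : Matrix ι ι ℝ} {active : ι → Prop} [DecidablePred active] {h : ι → ℝ}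

theorem cascadeStep_eq_of_active_iff (s : Finset ι) (hs : ∀ j, active j ↔ j ∈ s) :
    cascadeStep l active h = fun i => min 1 (h i + ∑ j ∈ s, l i j * h j) := by
  have hfilter : univ.filter active = s := by ext j; simp [hs]
  funext i
  rw [cascadeStep, ← sum_filter, hfilter]

theorem cascadeStep_le_one (i : ι) : cascadeStep l active h i ≤ 1 :=
  min_le_left _ _

theorem cascadeStep_eq_self (hle : ∀ i, h i ≤ 1) (hnone : ∀ j, ¬ active j) :
    cascadeStep l active h = h := by
  rw [cascadeStep_eq_of_active_iff ∅ (by simpa using hnone)]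
  funext i
  simpa using hle i

theorem cascadeStep_eq_one_of_eq_one (hl : ∀ i j, 0 ≤ l i j) (hh : ∀ j, 0 ≤ h j) {i : ι}
    (hi : h i = 1) : cascadeStep l active h i = 1 := by
  have hsum : 0 ≤ ∑ j, if active j then l i j * h j else 0 :=
    sum_nonneg fun j _ => ite_nonneg (mul_nonneg (hl i j) (hh j)) le_rfl
  rw [cascadeStep, hi]
  exact min_eq_left (by linarith)

variable {h : ℕ → ι → ℝ} {active : ℕ → ι → Prop} [∀ t, DecidablePred (active t)]

theorem cascade_eq_one_of_ge (hl : ∀ i j, 0 ≤ l i j)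
    (hupd : ∀ t, 1 ≤ t → h (t + 1) = cascadeStep l (active t) (h t))
    {T : ℕ} (hT : 1 ≤ T) (hT1 : h T = 1) : ∀ t, T ≤ t → h t = 1 := by
  intro t ht
  induction t, ht using Nat.le_induction with
  | base => exact hT1
  | succ t hTt ih =>
    rw [hupd t (hT.trans hTt), ih]
    funext i
    exact cascadeStep_eq_one_of_eq_one hl (fun _ => zero_le_one) rfl

theorem distress_cascade_eq_of_ge_two
    (hupd : ∀ t, 1 ≤ t → h (t + 1) = cascadeStep l (NewlyDistressed h t) (h t))
    (h1 : ∀ j, h 1 j ≠ 0) : ∀ t, 2 ≤ t → h t = h 2 := by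
  intro t ht
  induction t, ht using Nat.le_induction with
  | base => rfl
  | succ t h2t ih =>
    have hle : ∀ i, h t i ≤ 1 := by
      obtain ⟨s, rfl⟩ : ∃ s, t = s + 1 := ⟨t - 1, by omega⟩
      rw [hupd s (by omega)]
      exact cascadeStep_le_one
    have hnone : ∀ j, ¬ NewlyDistressed h t j := fun j hj => h1 j (hj.2 1 (by omega))
    rw [hupd t (by omega), cascadeStep_eq_self hle hnone, ih]

end Cascade

noncomputable def cycleExposure : Matrix (Fin 3) (Fin 3) ℝ :=
  !![0, 0, 4; 4/3, 0, 0; 0, 3/5, 0]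

theorem cycleExposure_nonneg (i j : Fin 3) : 0 ≤ cycleExposure i j := by
  fin_cases i <;> fin_cases j <;> norm_num [cycleExposure, Matrix.cons_val_two]

theorem cycle_default_cascade {h : ℕ → Fin 3 → ℝ} (h0 : h 0 = 0) (h1 : h 1 = ![1, 2/3, 2/5])
    (hupd : ∀ t, 1 ≤ t → h (t + 1) = cascadeStep cycleExposure (NewlyDefaulted h t) (h t)) :
    ∀ t, 3 ≤ t → h t = 1 := by
  have h2 : h 2 = ![1, 1, 2/5] := by
    rw [hupd 1 le_rfl, cascadeStep_eq_of_active_iff {0} ?_, h1]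
    · funext i; fin_cases i <;> norm_num [cycleExposure, Matrix.cons_val_two]
    · intro j; fin_cases j <;> norm_num [NewlyDefaulted, h0, h1]
  have h3 : h 3 = 1 := by
    rw [hupd 2 (by norm_num), cascadeStep_eq_of_active_iff {1} ?_, h2]
    · funext i; fin_cases i <;> norm_num [cycleExposure, Matrix.cons_val_two]
    · intro j
      fin_cases j <;>
        simp only [NewlyDefaulted, Nat.forall_lt_succ_right, Nat.not_lt_zero, IsEmpty.forall_iff,
          forall_const, true_and] <;>
        norm_num [h0, h1, h2]
  exact cascade_eq_one_of_ge cycleExposure_nonneg hupd (by norm_num) h3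

theorem cycle_distress_cascade {h : ℕ → Fin 3 → ℝ} (h0 : h 0 = 0) (h1 : h 1 = ![1, 2/3, 2/5])
    (hupd : ∀ t, 1 ≤ t → h (t + 1) = cascadeStep cycleExposure (NewlyDistressed h t) (h t)) :
    ∀ t, 2 ≤ t → h t = ![1, 1, 4/5] := by
  have h2 : h 2 = ![1, 1, 4/5] := by
    rw [hupd 1 le_rfl, cascadeStep_eq_of_active_iff univ ?_, h1]
    · funext i; fin_cases i <;> norm_num [cycleExposure, Fin.sum_univ_three, Matrix.cons_val_two]
    · intro j; fin_cases j <;> norm_num [NewlyDistressed, h0, h1]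
  have h1_ne : ∀ j, h 1 j ≠ 0 := by
    intro j; fin_cases j <;> norm_num [h1]
  intro t ht
  rw [distress_cascade_eq_of_ge_two hupd h1_ne t ht, h2]

/-- Counterexample showing DC can exceed aDR: on the directed 3-cycle with
E(0) = (5,15,25), A^e = (100,100,100), A^b_{13}=20, A^b_{21}=20, A^b_{32}=15 and a
uniform 10% shock, DC ends with h = (1,1,1) while aDR ends with h = (1,1,4/5), so
H^DC(∞) > H^aDR(∞). -/
theorem dc_not_le_adr_counterexample
    (E0 Ae : Fin 3 → ℝ) (hE0 : E0 = ![5, 15, 25]) (hAe : Ae = ![100, 100, 100])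
    (Ab : Matrix (Fin 3) (Fin 3) ℝ)
    (hAb : Ab = ![![0, 0, 20], ![20, 0, 0], ![0, 15, 0]])
    (l : Matrix (Fin 3) (Fin 3) ℝ) (hlm : ∀ i j, l i j = Ab i j / E0 i)
    (hDC haDR : ℕ → Fin 3 → ℝ)
    (hDC0 : ∀ i, hDC 0 i = 0) (haDR0 : ∀ i, haDR 0 i = 0)
    (hDC1 : ∀ i, hDC 1 i = min 1 (Ae i * (1/10) / E0 i))
    (haDR1 : ∀ i, haDR 1 i = min 1 (Ae i * (1/10) / E0 i))
    (hDCupd : ∀ t, 1 ≤ t → ∀ i, hDC (t+1) i =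
      min 1 (hDC t i + ∑ j,
        if hDC t j = 1 ∧ (∀ t' < t, hDC t' j < 1) then l i j * hDC t j else 0))
    (haDRupd : ∀ t, 1 ≤ t → ∀ i, haDR (t+1) i =
      min 1 (haDR t i + ∑ j,
        if 0 < haDR t j ∧ (∀ t' < t, haDR t' j = 0) then l i j * haDR t j else 0)) :
    ∃ T, 1 ≤ T ∧ ∀ t, T ≤ t →
      (∀ i, hDC t i = 1) ∧ (haDR t = ![1, 1, 4/5]) ∧
      (∑ i, E0 i * haDR t i) / (∑ i, E0 i) < (∑ i, E0 i * hDC t i) / (∑ i, E0 i) := by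
  subst hE0 hAe hAb
  obtain rfl : l = cycleExposure := by
    ext i j
    rw [hlm]
    fin_cases i <;> fin_cases j <;> norm_num [cycleExposure]
  have hshock : ∀ {h : Fin 3 → ℝ},
      (∀ i, h i = min 1 (![100, 100, 100] i * (1/10) / ![5, 15, 25] i)) → h = ![1, 2/3, 2/5] := by
    intro h hh
    funext i
    fin_cases i <;> norm_num [hh, Matrix.cons_val_two]
  have hdc := cycle_default_cascade (funext hDC0) (hshock hDC1) fun t ht => funext (hDCupd t ht)
  have hadr := cycle_distress_cascade (funext haDR0) (hshock haDR1) fun t ht =>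
    funext (haDRupd t ht)
  refine ⟨3, by norm_num, fun t ht => ⟨congrFun (hdc t ht), hadr t (by omega), ?_⟩⟩
  rw [hdc t ht, hadr t (by omega)]
  norm_num [Fin.sum_univ_three, Matrix.cons_val_two]
end

section
/- It is not true in general that the Eisenberg-Noe model yields lower final global vulnerability than the acyclic DebtRank model: there exists a 3-bank chain network where, after a 100% shock on external assets, the EN model ends with all banks defaulted (h^{EN}(∞) = (1,1,1)) while the acyclic DebtRank ends with h^{aDR}(∞) = (1, 1, 32/49), so H^{EN}(∞) > H^{aDR}(∞). The example: equities E(0) = (15, 35, 35), external assets A^e = (100, 5, 20), interbank assets A^b_{21} = 50, A^b_{32} = 20, and no other interbank links. -/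
/-!
With zero recovery on external assets, payments drain along the chain 1 → 2 → 3: bank 1 pays
nothing from round two on, bank 2 from round three on, bank 3 from round four on, after which
every bank's net interbank position has vanished and every EN vulnerability equals 1.
In acyclic DebtRank the shock alone already distresses every bank at round one, so exactly one
round of propagation takes place and the process is frozen afterwards; bank 3 then stops at
4/7 + (20/35)(1/7) = 32/49.
-/

section EisenbergNoe

variable {ι : Type*} [Fintype ι]

theorem payments_eq_zero_of_eq_zero (pbar : ι → ℝ) (hpbar : 0 ≤ pbar) (Pm : Matrix ι ι ℝ)
    (p : ℕ → ι → ℝ) (T : ℕ) (hT : p T = 0)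
    (hupd : ∀ t, T ≤ t → ∀ i, p (t + 1) i = min (pbar i) (∑ j, Pm j i * p t j)) :
    ∀ t, T ≤ t → p t = 0 := by
  intro t ht
  induction t, ht using Nat.le_induction with
  | base => exact hT
  | succ t ht ih =>
    funext i
    simpa [hupd t ht i, ih] using hpbar i

theorem en_vulnerability_eq_one_of_payments_eq_zero (E0 : ι → ℝ) (Pm : Matrix ι ι ℝ)
    (p : ι → ℝ) (hp : p = 0) (i : ι) (hE0 : E0 i ≠ 0) :
    (E0 i - max 0 (∑ j, Pm j i * p j - p i)) / E0 i = 1 := by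
  simp [hp, hE0]

theorem chain_payments_eq_zero (Pm : Matrix (Fin 3) (Fin 3) ℝ)
    (hPm : ∀ i j, Pm i j = ![![0, 0, 0], ![50, 0, 0], ![0, 20, 0]] j i / ![85, 20, 5] i)
    (p : ℕ → Fin 3 → ℝ) (hp1 : ∀ i, p 1 i = ![85, 20, 5] i)
    (hpupd : ∀ t, 1 ≤ t → ∀ i, p (t + 1) i = min (![85, 20, 5] i) (∑ j, Pm j i * p t j)) :
    ∀ t, 4 ≤ t → p t = 0 := by
  have hstep : ∀ t, 1 ≤ t → p (t + 1) = ![0, min 20 (10 / 17 * p t 0), min 5 (p t 1)] := by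
    intro t ht
    funext i
    rw [hpupd t ht i]
    fin_cases i <;> norm_num [Fin.sum_univ_three, hPm, Matrix.cons_val_two]
  have hp4 : p 4 = 0 := by
    have hp3 := hstep 2 (by norm_num)
    simp only [hp1, hstep 1 le_rfl] at hp3
    rw [hstep 3 (by norm_num), hp3]
    ext i
    fin_cases i <;> norm_num
  exact payments_eq_zero_of_eq_zero _ (by simp [Pi.le_def, Fin.forall_fin_succ]) Pm p 4 hp4
    fun t ht => hpupd t (by omega)

end EisenbergNoe

section AcyclicDebtRank

theorem not_newly_distressed_of_pos {ι : Type*} (h : ℕ → ι → ℝ) {s t : ℕ} (hst : s < t) (j : ι)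
    (hs : 0 < h s j) : ¬(0 < h t j ∧ ∀ t' < t, h t' j = 0) :=
  fun ⟨_, hzero⟩ => hs.ne' (hzero s hst)

variable {ι : Type*} [Fintype ι] (Ab : Matrix ι ι ℝ) (E0 : ι → ℝ) (h : ℕ → ι → ℝ)
  (hupd : ∀ t, 1 ≤ t → ∀ i, h (t + 1) i =
    min 1 (h t i + ∑ j,
      if 0 < h t j ∧ (∀ t' < t, h t' j = 0) then (Ab i j / E0 i) * h t j else 0))
include hupd

theorem adr_two_of_pos (h0 : ∀ i, h 0 i = 0) (h1 : ∀ j, 0 < h 1 j) (i : ι) :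
    h 2 i = min 1 (h 1 i + ∑ j, Ab i j / E0 i * h 1 j) := by
  rw [hupd 1 le_rfl i]
  congr 2
  refine Finset.sum_congr rfl fun j _ => if_pos ⟨h1 j, fun t' ht' => ?_⟩
  rw [Nat.lt_one_iff.mp ht', h0]

theorem adr_eq_two_of_pos (h1 : ∀ j, 0 < h 1 j) : ∀ t, 2 ≤ t → h t = h 2 := by
  intro t ht
  induction t, ht using Nat.le_induction with
  | base => rfl
  | succ t ht ih =>
    funext i
    have hinactive : ∀ j, ¬(0 < h t j ∧ ∀ t' < t, h t' j = 0) :=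
      fun j => not_newly_distressed_of_pos h (by omega) j (h1 j)
    have h2_le : h 2 i ≤ 1 := (hupd 1 le_rfl i).symm ▸ min_le_left _ _
    rw [hupd t (by omega) i, Finset.sum_eq_zero fun j _ => if_neg (hinactive j), add_zero, ih,
      min_eq_right h2_le]

end AcyclicDebtRank

/-- Counterexample showing EN can exceed aDR: on the 3-bank chain with
E(0) = (15,35,35), A^e = (100,5,20), A^b_{21}=50, A^b_{32}=20, after a 100% shock on
external assets, EN ends with h = (1,1,1) while aDR ends with h = (1,1,32/49), so
H^EN(∞) > H^aDR(∞). -/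
theorem en_not_le_adr_counterexample
    (E0 Ae : Fin 3 → ℝ) (hE0 : E0 = ![15, 35, 35]) (hAe : Ae = ![100, 5, 20])
    (Ab : Matrix (Fin 3) (Fin 3) ℝ)
    (hAb : Ab = ![![0, 0, 0], ![50, 0, 0], ![0, 20, 0]])
    (pbar : Fin 3 → ℝ) (hpbar : pbar = ![85, 20, 5])
    (Pm : Matrix (Fin 3) (Fin 3) ℝ) (hPm : ∀ i j, Pm i j = Ab j i / pbar i)
    (p : ℕ → Fin 3 → ℝ) (hp1 : ∀ i, p 1 i = pbar i)
    (hpupd : ∀ t, 1 ≤ t → ∀ i,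
      p (t+1) i = min (pbar i) (∑ j, Pm j i * p t j + (1 - 1) * Ae i))
    (hEN : ℕ → Fin 3 → ℝ)
    (hENdef : ∀ t, 1 ≤ t → ∀ i, hEN t i =
      (E0 i - max 0 (∑ j, Pm j i * p t j + (1 - 1) * Ae i - p t i)) / E0 i)
    (haDR : ℕ → Fin 3 → ℝ) (haDR0 : ∀ i, haDR 0 i = 0)
    (haDR1 : ∀ i, haDR 1 i = min 1 (Ae i / E0 i))
    (haDRupd : ∀ t, 1 ≤ t → ∀ i, haDR (t+1) i =
      min 1 (haDR t i + ∑ j,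
        if 0 < haDR t j ∧ (∀ t' < t, haDR t' j = 0) then (Ab i j / E0 i) * haDR t j else 0)) :
    ∃ T, 1 ≤ T ∧ ∀ t, T ≤ t →
      (∀ i, hEN t i = 1) ∧ (haDR t = ![1, 1, 32/49]) ∧
      (∑ i, E0 i * haDR t i) / (∑ i, E0 i) < (∑ i, E0 i * hEN t i) / (∑ i, E0 i) := by
  subst hE0 hAe hAb hpbar
  simp only [sub_self, zero_mul, add_zero] at hpupd hENdef
  have hp := chain_payments_eq_zero Pm hPm p hp1 hpupd
  have hENone : ∀ t, 4 ≤ t → ∀ i, hEN t i = 1 := fun t ht i => by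
    rw [hENdef t (by omega) i,
      en_vulnerability_eq_one_of_payments_eq_zero _ Pm _ (hp t ht) i (by fin_cases i <;> simp)]
  have h1 : haDR 1 = ![1, 1 / 7, 4 / 7] := by
    funext i
    rw [haDR1]
    fin_cases i <;> norm_num
  have h1pos : ∀ j, 0 < haDR 1 j := by
    simp [h1, Fin.forall_fin_succ]
  have h2 : haDR 2 = ![1, 1, 32 / 49] := by
    funext i
    rw [adr_two_of_pos _ _ haDR haDRupd haDR0 h1pos i]
    fin_cases i <;> simp [Fin.sum_univ_three, h1] <;> norm_num
  refine ⟨4, by norm_num, fun t ht => ?_⟩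
  have hDR : haDR t = ![1, 1, 32 / 49] :=
    (adr_eq_two_of_pos _ _ haDR haDRupd h1pos t (by omega)).trans h2
  refine ⟨hENone t ht, hDR, ?_⟩
  simp [Fin.sum_univ_three, hDR, hENone t ht]
  norm_num
end

section
/- Analytical expression for the final global vulnerability in the Eisenberg-Noe model: H^{EN}(∞) = (1/Σ_i E_i(0)) · Σ_i [A^e_i s_i − (1 − β_i)(p̄_i − p_i(∞))], where β_i = L^b_i/(L^b_i + L^e_i) is the financial connectivity of bank i and p(∞) is the clearing payment vector. -/
/-- Analytical expression for the final global vulnerability in the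
Eisenberg-Noe model:
H^EN(∞) = (1/Σ E_i(0)) Σ_i [A^e_i s_i − (1 − β_i)(p̄_i − p_i(∞))]. -/
theorem en_final_global_vulnerability
    (n : ℕ) (Lb : Matrix (Fin n) (Fin n) ℝ)
    (Le Ae s pbar E0 pinf Einf β : Fin n → ℝ)
    (hLe : ∀ i, 0 ≤ Le i)
    (hpbar : ∀ i, pbar i = (∑ j, Lb i j) + Le i) (hpbarpos : ∀ i, 0 < pbar i)
    (Pm : Matrix (Fin n) (Fin n) ℝ) (hPm : ∀ i j, Pm i j = Lb i j / pbar i)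
    (hβ : ∀ i, β i = (∑ j, Lb i j) / pbar i)
    (hE0 : ∀ i, E0 i = ∑ j, Pm j i * pbar j + Ae i - pbar i) (hE0pos : ∀ i, 0 < E0 i)
    (hs : ∀ i, s i ∈ Set.Icc (0:ℝ) 1)
    (hclear : ∀ i, pinf i = min (∑ j, Pm j i * pinf j + Ae i * (1 - s i)) (pbar i))
    (hEinf : ∀ i, Einf i = ∑ j, Pm j i * pinf j + Ae i * (1 - s i) - pinf i)
    (hEinfnonneg : ∀ i, 0 ≤ Einf i)
    (H : ℝ) (hH : H = ((∑ i, E0 i) - ∑ i, Einf i) / ∑ i, E0 i) :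
    H = (1 / ∑ i, E0 i) * ∑ i, (Ae i * s i - (1 - β i) * (pbar i - pinf i)) := by

  have hrow : ∀ j, (∑ i, Pm j i) = β j := by
    intro j
    rw [hβ j, Finset.sum_div]
    exact Finset.sum_congr rfl (fun i _ => hPm j i)
  have key : (∑ i, E0 i) - ∑ i, Einf i
      = ∑ i, (Ae i * s i - (1 - β i) * (pbar i - pinf i)) := by
    have h1 : ∀ i, E0 i - Einf i
        = (∑ j, Pm j i * (pbar j - pinf j)) + (Ae i * s i - (pbar i - pinf i)) := by
      intro i
      rw [hE0 i, hEinf i]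
      have : (∑ j, Pm j i * (pbar j - pinf j))
          = (∑ j, Pm j i * pbar j) - ∑ j, Pm j i * pinf j := by
        rw [← Finset.sum_sub_distrib]
        exact Finset.sum_congr rfl (fun j _ => by ring)
      rw [this]; ring
    calc (∑ i, E0 i) - ∑ i, Einf i = ∑ i, (E0 i - Einf i) := by
          rw [Finset.sum_sub_distrib]
      _ = ∑ i, ((∑ j, Pm j i * (pbar j - pinf j)) + (Ae i * s i - (pbar i - pinf i))) :=
          Finset.sum_congr rfl (fun i _ => h1 i)
      _ = (∑ i, ∑ j, Pm j i * (pbar j - pinf j)) + ∑ i, (Ae i * s i - (pbar i - pinf i)) := by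
          rw [Finset.sum_add_distrib]
      _ = (∑ j, (∑ i, Pm j i) * (pbar j - pinf j)) + ∑ i, (Ae i * s i - (pbar i - pinf i)) := by
          rw [Finset.sum_comm]
          congr 1
          exact Finset.sum_congr rfl (fun j _ => (Finset.sum_mul ..).symm)
      _ = (∑ j, β j * (pbar j - pinf j)) + ∑ i, (Ae i * s i - (pbar i - pinf i)) := by
          congr 1
          exact Finset.sum_congr rfl (fun j _ => by rw [hrow j])
      _ = ∑ i, (Ae i * s i - (1 - β i) * (pbar i - pinf i)) := by
          rw [← Finset.sum_add_distrib]
          exact Finset.sum_congr rfl (fun i _ => by ring)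
  rw [hH, key, div_eq_mul_inv, mul_comm, one_div]
end

section
/- Conservation of losses in the Eisenberg-Noe model without external liabilities: if β_i = 1 for all banks (no external liabilities), then the total equity loss at convergence equals exactly the total initial shock on external assets: Σ_i (E_i(0) − E_i(∞)) = Σ_i s_i A^e_i. Consequently, for a common shock s_i = s, H^{EN}(∞) = s · (Σ_i A^e_i)/(Σ_i E_i(0)) = s · l^e_{sys}, independently of the network topology. -/
/-- Conservation of losses in the Eisenberg-Noe model without external
liabilities: if L^e_i = 0 for all banks (β_i = 1), then total equity loss at
convergence equals the total initial shock on external assets, and for a common shock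
s the final global vulnerability is s · Σ A^e / Σ E(0), independently of topology. -/
theorem en_conservation_of_losses
    (n : ℕ) (Lb : Matrix (Fin n) (Fin n) ℝ)
    (Ae s pbar E0 pinf Einf : Fin n → ℝ)
    (hpbar : ∀ i, pbar i = ∑ j, Lb i j) (hpbarpos : ∀ i, 0 < pbar i)
    (Pm : Matrix (Fin n) (Fin n) ℝ) (hPm : ∀ i j, Pm i j = Lb i j / pbar i)
    (hE0 : ∀ i, E0 i = ∑ j, Pm j i * pbar j + Ae i - pbar i) (hE0pos : ∀ i, 0 < E0 i)
    (hs : ∀ i, s i ∈ Set.Icc (0:ℝ) 1)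
    (hclear : ∀ i, pinf i = min (∑ j, Pm j i * pinf j + Ae i * (1 - s i)) (pbar i))
    (hEinf : ∀ i, Einf i = ∑ j, Pm j i * pinf j + Ae i * (1 - s i) - pinf i)
    (hEinfnonneg : ∀ i, 0 ≤ Einf i)
    (H : ℝ) (hH : H = ((∑ i, E0 i) - ∑ i, Einf i) / ∑ i, E0 i) :
    (∑ i, (E0 i - Einf i)) = ∑ i, s i * Ae i ∧
    (∀ c : ℝ, (∀ i, s i = c) → H = c * (∑ i, Ae i) / ∑ i, E0 i) := by
  have key : ∀ v : Fin n → ℝ, (∑ i, ∑ j, Pm j i * v j) = ∑ j, v j := by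
    intro v
    rw [Finset.sum_comm]
    refine Finset.sum_congr rfl fun j _ => ?_
    have : (∑ i, Pm j i * v j) = (∑ i, Pm j i) * v j := by
      rw [Finset.sum_mul]
    rw [this]
    have : (∑ i, Pm j i) = 1 := by
      simp only [hPm]
      rw [← Finset.sum_div, ← hpbar j, div_self (hpbarpos j).ne']
    rw [this, one_mul]
  have hE0sum : (∑ i, E0 i) = ∑ i, Ae i := by
    simp only [hE0]
    rw [Finset.sum_sub_distrib, Finset.sum_add_distrib, key pbar]
    ring
  have hEinfsum : (∑ i, Einf i) = ∑ i, Ae i * (1 - s i) := by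
    simp only [hEinf]
    rw [Finset.sum_sub_distrib, Finset.sum_add_distrib, key pinf]
    ring
  have main : (∑ i, (E0 i - Einf i)) = ∑ i, s i * Ae i := by
    rw [Finset.sum_sub_distrib, hE0sum, hEinfsum, ← Finset.sum_sub_distrib]
    refine Finset.sum_congr rfl fun i _ => by ring
  refine ⟨main, fun c hc => ?_⟩
  rw [hH, ← Finset.sum_sub_distrib, main]
  simp only [hc]
  rw [← Finset.mul_sum]
end

section
/- Exact second-round losses in the Eisenberg-Noe model: H^{EN}(∞) − H^{EN}(1) = (1/Σ_i E_i(0)) · [Σ_{i ∈ D(1)} (A^e_i s_i − E_i(0)) − Σ_i (1 − β_i)(p̄_i − p_i(∞))], where D(1) = {i : s_i > 1/l^e_i} is the set of banks defaulted at the first round and l^e_i = A^e_i/E_i(0) is the external leverage. -/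
/-! A bank's first-round loss `E_i(0) · min{1, l^e_i s_i}` is its external loss `A^e_i s_i` capped
at its equity `E_i(0)`, so the uncapped and capped losses differ exactly by the excess
`A^e_i s_i − E_i(0)` of the first-round defaulters, and zero for everyone else. Subtracting
`H^{EN}(1)` from the conservation formula for `H^{EN}(∞)` leaves these excesses and the
interbank shortfall term. -/

lemma mul_min_one_div_mul {E A s : ℝ} (hE : 0 < E) :
    E * min 1 (A / E * s) = min E (A * s) := by
  rw [mul_min_of_nonneg _ _ hE.le, mul_one, ← mul_assoc, mul_div_cancel₀ _ hE.ne']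

lemma sub_min_eq_ite (x E : ℝ) : x - min E x = if E < x then x - E else 0 := by
  split_ifs with h
  · rw [min_eq_left h.le]
  · rw [min_eq_right (not_lt.mp h), sub_self]

lemma one_div_div_lt_iff {E A s : ℝ} (hA : 0 < A) : 1 / (A / E) < s ↔ E < A * s := by
  rw [one_div_div, div_lt_iff₀ hA, mul_comm]

lemma sum_sub_sum_mul_min_eq_sum_filter {ι : Type*} (t : Finset ι) (E A s : ι → ℝ)
    (hE : ∀ i, 0 < E i) (hA : ∀ i, 0 < A i) :
    ∑ i ∈ t, A i * s i - ∑ i ∈ t, E i * min 1 (A i / E i * s i) =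
      ∑ i ∈ t.filter (fun i => 1 / (A i / E i) < s i), (A i * s i - E i) := by
  rw [← Finset.sum_sub_distrib, Finset.sum_filter]
  refine Finset.sum_congr rfl fun i _ => ?_
  rw [mul_min_one_div_mul (hE i), sub_min_eq_ite]
  exact if_congr (one_div_div_lt_iff (hA i)).symm rfl rfl

theorem en_second_round_losses_general
    (n : ℕ) (Ae s pbar E0 pinf β le : Fin n → ℝ)
    (hE0pos : ∀ i, 0 < E0 i) (hAe : ∀ i, 0 < Ae i)
    (hle : ∀ i, le i = Ae i / E0 i)
    (H1 Hinf : ℝ)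
    (hH1 : H1 = (1 / ∑ i, E0 i) * ∑ i, E0 i * min 1 (le i * s i))
    (hHinf : Hinf =
      (1 / ∑ i, E0 i) * ∑ i, (Ae i * s i - (1 - β i) * (pbar i - pinf i))) :
    Hinf - H1 = (1 / ∑ i, E0 i) *
      ((∑ i ∈ Finset.univ.filter (fun i => 1 / le i < s i), (Ae i * s i - E0 i)) -
        ∑ i, (1 - β i) * (pbar i - pinf i)) := by
  obtain rfl : le = fun i => Ae i / E0 i := funext hle
  have hexcess := sum_sub_sum_mul_min_eq_sum_filter Finset.univ E0 Ae s hE0pos hAe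
  rw [hH1, hHinf, ← mul_sub, Finset.sum_sub_distrib, ← hexcess]
  ring

/-- Exact second-round losses in the Eisenberg-Noe model:
H^EN(∞) − H^EN(1) = (1/Σ E(0)) [Σ_{i∈D(1)} (A^e_i s_i − E_i(0))
  − Σ_i (1 − β_i)(p̄_i − p_i(∞))], where D(1) = {i : s_i > 1/l^e_i}. -/
theorem en_second_round_losses
    (n : ℕ) (Ae s pbar E0 pinf β le : Fin n → ℝ)
    (hE0pos : ∀ i, 0 < E0 i) (hAe : ∀ i, 0 < Ae i)
    (hle : ∀ i, le i = Ae i / E0 i)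
    (hs : ∀ i, s i ∈ Set.Icc (0:ℝ) 1)
    (hβ : ∀ i, β i ∈ Set.Icc (0:ℝ) 1)
    (H1 Hinf : ℝ)
    (hH1 : H1 = (1 / ∑ i, E0 i) * ∑ i, E0 i * min 1 (le i * s i))
    (hHinf : Hinf =
      (1 / ∑ i, E0 i) * ∑ i, (Ae i * s i - (1 - β i) * (pbar i - pinf i))) :
    Hinf - H1 = (1 / ∑ i, E0 i) *
      ((∑ i ∈ Finset.univ.filter (fun i => 1 / le i < s i), (Ae i * s i - E0 i)) -
        ∑ i, (1 - β i) * (pbar i - pinf i)) :=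
  en_second_round_losses_general n Ae s pbar E0 pinf β le hE0pos hAe hle H1 Hinf hH1 hHinf
end
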